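/- arXiv:2301.11718 — 2 statements merged into one kernel-verified Lean document; each statement's English description precedes it below -/
import Mathlib

section
/- Let u_1,...,u_N be real numbers with sum zero and (1/N)∑ u_k² = t. If (w_1,w_2,w_3) is obtained by sampling without replacement, then E[w_1² w_2 w_3] = (2/((N-1)(N-2)))·(1/N)∑_{k=1}^N u_k⁴ − (N/((N-1)(N-2)))·t². -/
open Finset

/-! Removing `s` and then `r ≠ s` from a sum-zero sequence leaves `∑_{l ∉ {s,r}} u l = -u s - u r`,
so the inner sums collapse: `∑_{r ≠ s} ∑_{l ∉ {s,r}} u r u l = 2 u s² - ∑ u²`. Weighting by `u s²`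
and summing over `s` gives `2 ∑ u⁴ - (∑ u²)² = 2 ∑ u⁴ - N² t²`. -/

section SumZero

variable {ι R : Type*} [Fintype ι] [DecidableEq ι] [CommRing R] {u : ι → R}

theorem sum_erase_eq_neg_of_sum_eq_zero (hsum : ∑ k, u k = 0) (s : ι) :
    ∑ r ∈ univ.erase s, u r = -u s := by
  rw [sum_erase_eq_sub (mem_univ s), hsum, zero_sub]

theorem sum_erase_sum_erase_mul_of_sum_eq_zero (hsum : ∑ k, u k = 0) (s : ι) :
    ∑ r ∈ univ.erase s, ∑ l ∈ (univ.erase s).erase r, u r * u l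
      = 2 * u s ^ 2 - ∑ k, u k ^ 2 := by
  have inner : ∀ r ∈ univ.erase s, ∑ l ∈ (univ.erase s).erase r, u r * u l
      = -(u s * u r) - u r ^ 2 := fun r hr => by
    rw [← mul_sum, sum_erase_eq_sub hr, sum_erase_eq_neg_of_sum_eq_zero hsum]
    ring
  rw [sum_congr rfl inner, sum_sub_distrib, sum_neg_distrib, ← mul_sum,
    sum_erase_eq_neg_of_sum_eq_zero hsum,
    sum_erase_eq_sub (f := fun k => u k ^ 2) (mem_univ s)]
  ring

theorem sum_sq_mul_mul_distinct_of_sum_eq_zero (hsum : ∑ k, u k = 0) :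
    ∑ s, ∑ r ∈ univ.erase s, ∑ l ∈ (univ.erase s).erase r, u s ^ 2 * u r * u l
      = 2 * ∑ k, u k ^ 4 - (∑ k, u k ^ 2) ^ 2 := by
  have inner : ∀ s : ι, ∑ r ∈ univ.erase s, ∑ l ∈ (univ.erase s).erase r, u s ^ 2 * u r * u l
      = 2 * u s ^ 4 - u s ^ 2 * ∑ k, u k ^ 2 := fun s => by
    calc _ = u s ^ 2 * ∑ r ∈ univ.erase s, ∑ l ∈ (univ.erase s).erase r, u r * u l := by
          simp only [mul_sum, mul_assoc]
      _ = _ := by rw [sum_erase_sum_erase_mul_of_sum_eq_zero hsum]; ring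
  rw [sum_congr rfl fun s _ => inner s, sum_sub_distrib, ← mul_sum, ← sum_mul]
  ring

end SumZero

/-- Let `u_1,...,u_N` (`N ≥ 3`) be real numbers with sum zero and
`(1/N) ∑ u_k² = t`. If `(w_1,w_2,w_3)` is obtained by sampling without replacement
(each ordered triple of distinct indices equally likely, probability `1/(N(N-1)(N-2))`),
then `E[w_1² w_2 w_3] = (2/((N-1)(N-2)))·(1/N)∑ u_k⁴ − (N/((N-1)(N-2)))·t²`. -/
theorem sampling_without_replacement_fourth_mixed
    (N : ℕ) (hN : 3 ≤ N) (u : Fin N → ℝ) (t : ℝ)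
    (hsum : ∑ k, u k = 0) (hvar : (∑ k, u k ^ 2) / N = t) :
    (∑ s : Fin N, ∑ r ∈ univ.erase s, ∑ l ∈ (univ.erase s).erase r,
        u s ^ 2 * u r * u l) / ((N : ℝ) * ((N : ℝ) - 1) * ((N : ℝ) - 2))
      = (2 / (((N : ℝ) - 1) * ((N : ℝ) - 2))) * ((∑ k, u k ^ 4) / N)
        - ((N : ℝ) / (((N : ℝ) - 1) * ((N : ℝ) - 2))) * t ^ 2 := by
  have hN' : (3 : ℝ) ≤ N := by exact_mod_cast hN
  have h0 : (N : ℝ) ≠ 0 := by linarith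
  have h1 : (N : ℝ) - 1 ≠ 0 := by linarith
  have h2 : (N : ℝ) - 2 ≠ 0 := by linarith
  rw [sum_sq_mul_mul_distinct_of_sum_eq_zero hsum, ← hvar]
  field_simp
end

section
/- Let A_1,...,A_n be complex numbers and let (x_1,...,x_n) be a uniformly random permutation of deterministic values v_1,...,v_n summing to zero. Define the martingale differences M_l = ∑_{j=1}^n A_j (E[x_j|F_l] − E[x_j|F_{l−1}]). Then M_l = (A_l − (1/(n−l))∑_{j=l+1}^n A_j)·(x_l + (1/(n−l+1))∑_{k=1}^{l−1} x_k) for 1 ≤ l ≤ n−1. -/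
open MeasureTheory Finset

noncomputable section

/-- The symmetric group `S_n` carries the discrete σ-algebra. -/
instance permMeasurableSpace (n : ℕ) : MeasurableSpace (Equiv.Perm (Fin n)) := ⊤

/-- The uniform probability measure on the permutations of `{1,...,n}`. -/
def permMeasure (n : ℕ) : Measure (Equiv.Perm (Fin n)) :=
  (PMF.uniformOfFintype (Equiv.Perm (Fin n))).toMeasure

instance (n : ℕ) : IsProbabilityMeasure (permMeasure n) :=
  PMF.toMeasure.isProbabilityMeasure _

/-- `F_l`, the σ-field generated by the first `l` samples `x_i = v (σ i)` of a uniformly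
random permutation `(x_1,…,x_n) = (v_{σ(1)},…,v_{σ(n)})` of the values `v_1,…,v_n`. -/
def sampleFiltration (n l : ℕ) (h : l ≤ n) (v : Fin n → ℝ) :
    MeasurableSpace (Equiv.Perm (Fin n)) :=
  MeasurableSpace.comap (fun σ => fun i : Fin l => v (σ (Fin.castLE h i))) inferInstance

/-! Given the first `l` samples, the unrevealed ones are exchangeable: right multiplication of
`σ` by a transposition of two unrevealed positions preserves the uniform measure and every event
of `F_l`. So `E[x_j | F_l]` is the same for all unrevealed `j`, and since the values sum to zero
it is minus the revealed sum divided by `n - l`; revealed `x_j` are their own conditional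
expectations. Subtracting these formulas at levels `l` and `l - 1` and summing against `A_j`
gives the linear form. -/

lemma PMF.measurePreserving_uniformOfFintype {α : Type*} [Fintype α] [Nonempty α]
    [MeasurableSpace α] [DiscreteMeasurableSpace α] (e : α ≃ α) :
    MeasurePreserving e (PMF.uniformOfFintype α).toMeasure
      (PMF.uniformOfFintype α).toMeasure := by
  classical
  refine ⟨.of_discrete, ?_⟩
  ext s -
  rw [Measure.map_apply .of_discrete .of_discrete,
    PMF.toMeasure_uniformOfFintype_apply (s := e ⁻¹' s) MeasurableSet.of_discrete,
    PMF.toMeasure_uniformOfFintype_apply (s := s) MeasurableSet.of_discrete,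
    Fintype.card_congr (e.subtypeEquiv fun _ => Iff.rfl : e ⁻¹' s ≃ s)]

lemma Fin.card_filter_le_val (n l : ℕ) : #{j : Fin n | l ≤ (j : ℕ)} = n - l := by
  have := card_filter_add_card_filter_not (s := (univ : Finset (Fin n))) (fun j => (j : ℕ) < l)
  simp only [Fin.card_filter_val_lt, not_lt, card_univ, Fintype.card_fin] at this
  omega

lemma Fin.filter_val_lt_succ {n m : ℕ} (hm : m < n) :
    univ.filter (fun k : Fin n => (k : ℕ) < m + 1)
      = insert ⟨m, hm⟩ (univ.filter fun k : Fin n => (k : ℕ) < m) := by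
  ext k
  simp only [mem_filter, mem_univ, true_and, mem_insert, Fin.ext_iff]
  omega

lemma Fin.sum_filter_le_val_eq_neg {M : Type*} [AddCommGroup M] {n : ℕ} {x : Fin n → M}
    (hx : ∑ j, x j = 0) (l : ℕ) :
    ∑ j ∈ univ.filter (fun j : Fin n => l ≤ (j : ℕ)), x j
      = -∑ k ∈ univ.filter (fun k : Fin n => (k : ℕ) < l), x k := by
  rw [eq_neg_iff_add_eq_zero, ← hx, add_comm,
    ← sum_filter_add_sum_filter_not univ (fun k : Fin n => (k : ℕ) < l)]
  simp only [not_lt]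

section SampleFiltration

variable {n l : ℕ}

lemma measurable_sample (h : l ≤ n) (v : Fin n → ℝ) {j : Fin n} (hj : (j : ℕ) < l) :
    Measurable[sampleFiltration n l h v] fun σ : Equiv.Perm (Fin n) => v (σ j) :=
  (measurable_pi_apply (⟨j, hj⟩ : Fin l)).comp
    (Measurable.of_comap_le le_rfl : Measurable[sampleFiltration n l h v]
      fun σ : Equiv.Perm (Fin n) => fun i : Fin l => v (σ (Fin.castLE h i)))

lemma preimage_mulRight_eq_of_measurableSet_sampleFiltration (h : l ≤ n) (v : Fin n → ℝ)
    {s : Set (Equiv.Perm (Fin n))} (hs : MeasurableSet[sampleFiltration n l h v] s)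
    {g : Equiv.Perm (Fin n)} (hg : ∀ i : Fin n, (i : ℕ) < l → g i = i) :
    Equiv.mulRight g ⁻¹' s = s := by
  obtain ⟨t, -, rfl⟩ := hs
  ext σ
  simp [Equiv.Perm.mul_apply, hg]

lemma setIntegral_sample_eq (h : l ≤ n) (v : Fin n → ℝ)
    {s : Set (Equiv.Perm (Fin n))} (hs : MeasurableSet[sampleFiltration n l h v] s)
    {j j' : Fin n} (hj : l ≤ (j : ℕ)) (hj' : l ≤ (j' : ℕ)) :
    ∫ σ in s, v (σ j) ∂permMeasure n = ∫ σ in s, v (σ j') ∂permMeasure n := by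
  set g := Equiv.swap j j'
  have hg : ∀ i : Fin n, (i : ℕ) < l → g i = i := fun i hi =>
    Equiv.swap_apply_of_ne_of_ne (by omega) (by omega)
  have hemb : MeasurableEmbedding (Equiv.mulRight g) :=
    ⟨(Equiv.mulRight g).injective, .of_discrete, fun _ _ => .of_discrete⟩
  have key :=
    (PMF.measurePreserving_uniformOfFintype (Equiv.mulRight g)).setIntegral_preimage_emb hemb
      (fun σ => v (σ j)) s
  rw [preimage_mulRight_eq_of_measurableSet_sampleFiltration h v hs hg] at key
  simpa [g, Equiv.Perm.mul_apply, permMeasure] using key.symm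

def prefixPredictor (l : ℕ) (x : Fin n → ℝ) (j : Fin n) : ℝ :=
  if (j : ℕ) < l then x j
  else -(∑ k ∈ univ.filter (fun k : Fin n => (k : ℕ) < l), x k) / (n - l)

lemma condExp_sample_of_lt (h : l ≤ n) (v : Fin n → ℝ) {j : Fin n} (hj : (j : ℕ) < l) :
    (permMeasure n)[fun τ => v (τ j) | sampleFiltration n l h v] = fun τ => v (τ j) :=
  condExp_of_stronglyMeasurable le_top (measurable_sample h v hj).stronglyMeasurable
    Integrable.of_finite

lemma condExp_sample_ae_eq_of_le (h : l ≤ n) {v : Fin n → ℝ} (hv : ∑ j, v j = 0) {j : Fin n}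
    (hj : l ≤ (j : ℕ)) :
    (permMeasure n)[fun τ => v (τ j) | sampleFiltration n l h v]
      =ᵐ[permMeasure n] fun σ => prefixPredictor l (fun k => v (σ k)) j := by
  have hnl : (n : ℝ) - l ≠ 0 := by
    have : (l : ℝ) < n := by exact_mod_cast hj.trans_lt j.isLt
    linarith
  simp only [prefixPredictor, if_neg (not_lt.2 hj)]
  refine (ae_eq_condExp_of_forall_setIntegral_eq le_top Integrable.of_finite
    (fun _ _ _ => Integrable.of_finite.integrableOn) (fun s hs _ => ?_) ?_).symm
  · calc ∫ σ in s, -(∑ k ∈ univ.filter (fun k : Fin n => (k : ℕ) < l), v (σ k)) / (n - l)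
          ∂permMeasure n
        = (∑ j' ∈ univ.filter (fun j' : Fin n => l ≤ (j' : ℕ)),
            ∫ σ in s, v (σ j') ∂permMeasure n) / (n - l) := by
          simp_rw [← Fin.sum_filter_le_val_eq_neg ((Equiv.sum_comp _ v).trans hv)]
          rw [integral_div, integral_finsetSum _ fun _ _ => Integrable.of_finite]
      _ = (∑ j' ∈ univ.filter (fun j' : Fin n => l ≤ (j' : ℕ)),
            ∫ σ in s, v (σ j) ∂permMeasure n) / (n - l) := by
          congr 1
          exact sum_congr rfl fun j' hj' => setIntegral_sample_eq h v hs (mem_filter.1 hj').2 hj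
      _ = ∫ σ in s, v (σ j) ∂permMeasure n := by
          rw [sum_const, Fin.card_filter_le_val, nsmul_eq_mul, Nat.cast_sub h]
          field_simp
  · exact ((Finset.measurable_sum _ fun k hk =>
      measurable_sample h v (mem_filter.1 hk).2).neg.div_const _).aestronglyMeasurable

lemma condExp_sample_ae_eq (h : l ≤ n) {v : Fin n → ℝ} (hv : ∑ j, v j = 0) :
    ∀ᵐ σ ∂permMeasure n, ∀ j : Fin n,
      (permMeasure n)[fun τ => v (τ j) | sampleFiltration n l h v] σ
        = prefixPredictor l (fun k => v (σ k)) j := by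
  refine ae_all_iff.2 fun j => ?_
  by_cases hj : (j : ℕ) < l
  · simp [condExp_sample_of_lt h v hj, prefixPredictor, hj]
  · exact condExp_sample_ae_eq_of_le h hv (not_lt.1 hj)

lemma sum_mul_prefixPredictor_sub (hl1 : 1 ≤ l) (hl2 : l < n) (A : Fin n → ℂ)
    (x : Fin n → ℝ) :
    ∑ j, A j * ((prefixPredictor l x j : ℂ) - prefixPredictor (l - 1) x j)
      = (A ⟨l - 1, (l.sub_le 1).trans_lt hl2⟩
          - (∑ j ∈ univ.filter (fun j : Fin n => l ≤ (j : ℕ)), A j) / ((n : ℂ) - l))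
        * ((x ⟨l - 1, (l.sub_le 1).trans_lt hl2⟩ : ℂ)
          + (∑ k ∈ univ.filter (fun k : Fin n => (k : ℕ) + 1 < l), (x k : ℂ))
            / ((n : ℂ) - l + 1)) := by
  obtain ⟨m, rfl⟩ : ∃ m, l = m + 1 := ⟨l - 1, by omega⟩
  simp only [Nat.add_sub_cancel]
  have hm : m < n := Nat.lt_of_succ_lt hl2
  have hlt := Fin.filter_val_lt_succ hm
  set xm : Fin n := ⟨m, hm⟩
  set S := ∑ k ∈ univ.filter (fun k : Fin n => (k : ℕ) < m), x k
  have hxm : xm ∉ univ.filter fun k : Fin n => (k : ℕ) < m := by simp [xm]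
  have h1 : (n : ℂ) - (m + 1) ≠ 0 := by
    rw [sub_ne_zero]; exact_mod_cast hl2.ne'
  have h2 : (n : ℂ) - m ≠ 0 := by
    rw [sub_ne_zero]; exact_mod_cast hm.ne'
  have hhigh : ∀ j : Fin n, m + 1 ≤ (j : ℕ) →
      (prefixPredictor (m + 1) x j : ℂ) - prefixPredictor m x j
        = -(x xm + S / ((n : ℂ) - m)) / ((n : ℂ) - (m + 1)) := by
    intro j hj
    simp only [prefixPredictor, if_neg (show ¬ (j : ℕ) < m + 1 by omega),
      if_neg (show ¬ (j : ℕ) < m by omega), hlt, sum_insert hxm]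
    push_cast [S]
    field_simp
    ring
  have hmid : (prefixPredictor (m + 1) x xm : ℂ) - prefixPredictor m x xm
      = x xm + S / ((n : ℂ) - m) := by
    simp only [prefixPredictor, xm, if_pos (Nat.lt_succ_self m), if_neg (lt_irrefl m)]
    push_cast [S]
    ring
  have hlow : ∀ j ∈ univ.filter fun k : Fin n => (k : ℕ) < m,
      A j * ((prefixPredictor (m + 1) x j : ℂ) - prefixPredictor m x j) = 0 := by
    intro j hj
    have hj : (j : ℕ) < m := (mem_filter.1 hj).2
    simp [prefixPredictor, hj, Nat.lt_succ_of_lt hj]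
  have hS : ∑ k ∈ univ.filter (fun k : Fin n => (k : ℕ) + 1 < m + 1), (x k : ℂ) = S := by
    push_cast [S]; simp only [Nat.add_lt_add_iff_right]
  rw [← sum_filter_add_sum_filter_not univ (fun j : Fin n => m + 1 ≤ (j : ℕ))]
  simp only [not_le]
  rw [hlt, sum_insert hxm, sum_eq_zero hlow, hmid,
    sum_congr rfl fun j hj => by rw [hhigh j (mem_filter.1 hj).2], ← sum_mul, hS]
  push_cast
  rw [show (n : ℂ) - (m + 1) + 1 = n - m by ring]
  field_simp
  ring

end SampleFiltration

/-- Let `A_1,...,A_n` be complex numbers and `(x_1,...,x_n)` a uniformly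
random permutation of deterministic values `v_1,...,v_n` summing to zero, with
`F_l = σ(x_1,...,x_l)`. Define the martingale differences
`M_l = ∑_{j=1}^n A_j (E[x_j|F_l] − E[x_j|F_{l−1}])`. Then for `1 ≤ l ≤ n−1`,
`M_l = (A_l − (1/(n−l)) ∑_{j=l+1}^n A_j) · (x_l + (1/(n−l+1)) ∑_{k=1}^{l−1} x_k)`
(indices `1`-indexed; a `1`-indexed index `r` corresponds to `⟨r−1, _⟩ : Fin n`). -/
theorem martingale_difference_linear_form
    (n l : ℕ) (hl1 : 1 ≤ l) (hl2 : l < n) (A : Fin n → ℂ)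
    (v : Fin n → ℝ) (hsum : ∑ j, v j = 0) :
    (fun σ => ∑ j : Fin n, A j *
        ((((permMeasure n)[(fun τ => v (τ j)) |
            sampleFiltration n l (by omega) v]) σ : ℂ)
          - (((permMeasure n)[(fun τ => v (τ j)) |
            sampleFiltration n (l - 1) (by omega) v]) σ : ℂ)))
      =ᵐ[permMeasure n]
      fun σ => (A ⟨l - 1, by omega⟩
          - (∑ j ∈ univ.filter (fun j : Fin n => l ≤ (j : ℕ)), A j) / ((n : ℂ) - l))
        * ((v (σ ⟨l - 1, by omega⟩) : ℂ)
          + (∑ k ∈ univ.filter (fun k : Fin n => (k : ℕ) + 1 < l), (v (σ k) : ℂ))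
            / ((n : ℂ) - l + 1)) := by
  filter_upwards [condExp_sample_ae_eq (l := l) (by omega) hsum,
    condExp_sample_ae_eq (l := l - 1) (by omega) hsum] with σ hcur hprev
  simp only [hcur, hprev]
  exact sum_mul_prefixPredictor_sub hl1 hl2 A _
end
end
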